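/- arXiv:math/9811011 — 2 statements merged into one kernel-verified Lean document; each statement's English description precedes it below -/
import Mathlib

section
/- Let {I_α : α < 𝔠} enumerate (with possible repetitions) all nonempty open intervals in ℝ. Then there exists a family of pairwise disjoint perfect sets {P_α : α < 𝔠} with P_α ⊆ I_α for each α, such that the union P = ⋃_{α<𝔠} P_α is meager in ℝ and linearly independent over ℚ. -/
/-!
For `σ : ℕ → Bool` let `x σ = ∑ₙ 2^(-r(σ, n)²)` (`lacunarySum`), where `r(σ, n) ≥ n`
(`prefixCode`) encodes the pair `(n, σ restricted to [0, n))` injectively. Given an integer relation `∑ c_σ x_σ = 0`, choose a level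
`n` that separates the finitely many `σ` involved and exceeds `2 ∑ |c_σ|`, and pick `σ₀` with
`c_σ₀ ≠ 0`. Then the exponent `r(σ₀, n)²` occurs only in `x σ₀`, and no other exponent lies within
distance `n` of it, because squares of distinct integers `≥ n` are at least `n` apart. So the
binary expansion of the relation has an isolated nonzero digit `c_σ₀`, which is impossible. Hence
`x` is a continuous injection of Cantor space whose range `K` is linearly independent over `ℚ`.

Fix an injection `e : ι → (ℕ → Bool)` and let `σᵢ` carry `e i` on the odd coordinates and `false`
on the even ones. Some `qᵢ ∈ ℚˣ` puts `qᵢ x σᵢ` into `I i`, and by continuity `qᵢ x` maps a whole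
cylinder around `σᵢ` into `I i`. Freeing the even coordinates beyond that cylinder gives a copy
`C i` of Cantor space; the `C i` are disjoint because their odd coordinates differ, so the
numbers `qᵢ x σ` with `σ ∈ C i` are distinct and `ℚ`-independent, and `P i = qᵢ x (C i)` works.
The union lies in `⋃_{q : ℚ} q • K`, a countable union of closed sets with empty interior, since
a `ℚ`-independent set of reals contains no two rationals.
-/

open Set Filter Topology Function PiNat

lemma summable_dyadic {a : ℕ → ℤ} {M : ℕ} (ha : ∀ k, |a k| ≤ M) :
    Summable fun k => (a k : ℝ) * 2⁻¹ ^ k := by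
  refine Summable.of_norm_bounded (g := fun k => (M : ℝ) * 2⁻¹ ^ k)
    ((summable_geometric_of_lt_one (by norm_num) (by norm_num)).mul_left _) fun k => ?_
  rw [norm_mul, norm_pow, Real.norm_eq_abs, Real.norm_eq_abs, abs_inv, abs_two]
  gcongr
  exact_mod_cast ha k

lemma abs_tsum_dyadic_tail_le {a : ℕ → ℤ} {M : ℕ} (ha : ∀ k, |a k| ≤ M) (n : ℕ) :
    |∑' j, (a (j + n) : ℝ) * 2⁻¹ ^ (j + n)| ≤ 2 * M * 2⁻¹ ^ n := by
  have hbound : ∀ j, ‖(a (j + n) : ℝ) * 2⁻¹ ^ (j + n)‖ ≤ M * 2⁻¹ ^ n * 2⁻¹ ^ j := fun j => by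
    have h : |(a (j + n) : ℝ)| ≤ M := by exact_mod_cast ha _
    rw [norm_mul, norm_pow, Real.norm_eq_abs, Real.norm_eq_abs, abs_inv, abs_two, pow_add]
    calc _ ≤ (M : ℝ) * (2⁻¹ ^ j * 2⁻¹ ^ n) := by gcongr
      _ = _ := by ring
  have hgeom : Summable fun j : ℕ => (M : ℝ) * 2⁻¹ ^ n * 2⁻¹ ^ j :=
    (summable_geometric_of_lt_one (by norm_num) (by norm_num)).mul_left _
  calc |∑' j, (a (j + n) : ℝ) * 2⁻¹ ^ (j + n)|
      ≤ ∑' j : ℕ, (M : ℝ) * 2⁻¹ ^ n * 2⁻¹ ^ j := by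
        rw [← Real.norm_eq_abs]; exact tsum_of_norm_bounded hgeom.hasSum hbound
    _ = 2 * M * 2⁻¹ ^ n := by
        rw [tsum_mul_left, tsum_geometric_inv_two]; ring

lemma exists_int_dyadic_head {a : ℕ → ℤ} {p G : ℕ}
    (hgap : ∀ k ≠ p, p < k + G → k < p + G → a k = 0) :
    ∃ Z : ℤ, (Z : ℝ) = 2 ^ p * ∑ k ∈ Finset.range (p + G), (a k : ℝ) * 2⁻¹ ^ k ∧
      (2 ^ G : ℤ) ∣ Z - a p := by
  have hfar : ∀ k < p + G, k ≠ p → a k ≠ 0 → k + G ≤ p := fun k hk hkp h0 => by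
    by_contra! h
    exact h0 (hgap k hkp (by omega) hk)
  refine ⟨∑ k ∈ Finset.range (p + G), a k * 2 ^ (p - k), ?_, ?_⟩
  · push_cast [Finset.mul_sum]
    refine Finset.sum_congr rfl fun k hk => ?_
    rcases eq_or_ne (a k) 0 with h0 | h0
    · simp [h0]
    have hkp : k ≤ p := by
      rcases eq_or_ne k p with rfl | hkp
      · rfl
      · have := hfar k (Finset.mem_range.mp hk) hkp h0; omega
    rw [pow_sub₀ _ two_ne_zero hkp, inv_pow]; ring
  · rcases Nat.eq_zero_or_pos G with rfl | hG
    · simp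
    rw [← Finset.add_sum_erase _ _ (Finset.mem_range.mpr (by omega : p < p + G)),
      Nat.sub_self, pow_zero, mul_one, add_sub_cancel_left]
    refine Finset.dvd_sum fun k hk => ?_
    obtain ⟨hkp, hk⟩ := Finset.mem_erase.mp hk
    rcases eq_or_ne (a k) 0 with h0 | h0
    · simp [h0]
    have := hfar k (Finset.mem_range.mp hk) hkp h0
    exact (pow_dvd_pow 2 (by omega)).mul_left _

/-- Multiplied by `2 ^ p`, the digits below `p + G` give an integer `≡ a p` modulo `2 ^ G`,
while the remaining ones contribute less than `1`. -/
theorem tsum_dyadic_ne_zero {a : ℕ → ℤ} {M p G : ℕ} (ha : ∀ k, |a k| ≤ M) (hMG : 2 * M < 2 ^ G)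
    (hp : a p ≠ 0) (hgap : ∀ k ≠ p, p < k + G → k < p + G → a k = 0) :
    ∑' k, (a k : ℝ) * 2⁻¹ ^ k ≠ 0 := by
  obtain ⟨Z, hZ, hdvd⟩ := exists_int_dyadic_head hgap
  intro hsum
  have hZ0 : Z = 0 := by
    have hsplit := (summable_dyadic ha).sum_add_tsum_nat_add (p + G)
    rw [hsum] at hsplit
    have hMG' : (2 * M : ℝ) < 2 ^ G := by exact_mod_cast hMG
    have : |(Z : ℝ)| < 1 := by
      rw [hZ, eq_neg_of_add_eq_zero_left hsplit, mul_neg, abs_neg, abs_mul,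
        abs_of_pos (by positivity)]
      calc _ ≤ (2 : ℝ) ^ p * (2 * M * 2⁻¹ ^ (p + G)) := by
            gcongr; exact abs_tsum_dyadic_tail_le ha (p + G)
        _ = 2 * M / 2 ^ G := by rw [pow_add, inv_pow, inv_pow]; field_simp
        _ < 1 := by rw [div_lt_one (by positivity)]; exact hMG'
    exact_mod_cast Int.abs_lt_one_iff.mp (by exact_mod_cast this)
  rw [hZ0, zero_sub, dvd_neg] at hdvd
  have hle := Int.natAbs_le_of_dvd_ne_zero hdvd hp
  have hpM : (a p).natAbs ≤ M := by have := ha p; rw [Int.abs_eq_natAbs] at this; omega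
  rw [Int.natAbs_pow] at hle
  exact absurd hle (by norm_num; omega)

lemma Nat.eq_of_sq_lt_sq_add {r t n : ℕ} (hn : n ≤ r) (h₁ : r ^ 2 < t ^ 2 + n)
    (h₂ : t ^ 2 < r ^ 2 + n) : t = r := by
  rcases lt_trichotomy t r with h | h | h
  · nlinarith
  · exact h
  · nlinarith

lemma eventually_prefix_separates {α : Type*} (s : Finset (ℕ → α)) :
    ∀ᶠ n in atTop, ∀ σ ∈ s, ∀ τ ∈ s, (∀ k < n, σ k = τ k) → σ = τ := by
  simp only [eventually_all_finset]
  intro σ _ τ _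
  by_cases h : σ = τ
  · exact Eventually.of_forall fun _ _ => h
  obtain ⟨k, hk⟩ := Function.ne_iff.mp h
  filter_upwards [eventually_gt_atTop k] with n hn hagree using absurd (hagree k hn) hk

def prefixCode (σ : ℕ → Bool) (n : ℕ) : ℕ :=
  Nat.pair n (Encodable.encode fun i : Fin n => σ i)

lemma le_prefixCode (σ : ℕ → Bool) (n : ℕ) : n ≤ prefixCode σ n := Nat.left_le_pair _ _

lemma prefixCode_eq_prefixCode {σ τ : ℕ → Bool} {n m : ℕ} (h : prefixCode σ n = prefixCode τ m) :
    n = m ∧ ∀ k < n, σ k = τ k := by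
  obtain ⟨rfl, h⟩ := Nat.pair_eq_pair.mp h
  exact ⟨rfl, fun k hk => congrFun (Encodable.encode_injective h) ⟨k, hk⟩⟩

lemma continuous_prefixCode (n : ℕ) : Continuous fun σ => prefixCode σ n :=
  (continuous_of_discreteTopology
    (f := fun w : Fin n → Bool => Nat.pair n (Encodable.encode w))).comp
      (continuous_pi fun i => continuous_apply (i : ℕ))

def lacunaryExponents (σ : ℕ → Bool) : Set ℕ := range fun n => prefixCode σ n ^ 2

noncomputable def lacunarySum (σ : ℕ → Bool) : ℝ := ∑' n, (2⁻¹ : ℝ) ^ (prefixCode σ n ^ 2)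

lemma lacunarySum_term_le (σ : ℕ → Bool) (n : ℕ) : (2⁻¹ : ℝ) ^ (prefixCode σ n ^ 2) ≤ 2⁻¹ ^ n :=
  pow_le_pow_of_le_one (by norm_num) (by norm_num)
    ((le_prefixCode σ n).trans (Nat.le_self_pow two_ne_zero _))

lemma lacunarySum_pos (σ : ℕ → Bool) : 0 < lacunarySum σ :=
  (Summable.of_nonneg_of_le (fun _ => by positivity) (lacunarySum_term_le σ)
    (summable_geometric_of_lt_one (by norm_num) (by norm_num))).tsum_pos
    (fun _ => by positivity) 0 (by positivity)

lemma continuous_lacunarySum : Continuous lacunarySum := by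
  refine continuous_tsum (fun n => (continuous_of_discreteTopology
      (f := fun m : ℕ => (2⁻¹ : ℝ) ^ (m ^ 2))).comp (continuous_prefixCode n))
    (summable_geometric_of_lt_one (by norm_num : (0 : ℝ) ≤ 2⁻¹) (by norm_num)) fun n σ => ?_
  rw [norm_pow, norm_inv, Real.norm_two]
  exact lacunarySum_term_le σ n

lemma lacunarySum_eq_tsum_indicator (σ : ℕ → Bool) :
    lacunarySum σ = ∑' k, (lacunaryExponents σ).indicator (fun k => (2⁻¹ : ℝ) ^ k) k := by
  have hinj : Injective fun n => prefixCode σ n ^ 2 :=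
    fun _ _ h => (prefixCode_eq_prefixCode (Nat.pow_left_injective two_ne_zero h)).1
  rw [lacunaryExponents, ← tsum_subtype, tsum_range _ hinj, lacunarySum]

lemma eq_of_mem_lacunaryExponents {σ τ : ℕ → Bool} {n k : ℕ} (hk : k ∈ lacunaryExponents τ)
    (h₁ : prefixCode σ n ^ 2 < k + n) (h₂ : k < prefixCode σ n ^ 2 + n) :
    k = prefixCode σ n ^ 2 ∧ ∀ i < n, τ i = σ i := by
  obtain ⟨m, rfl⟩ := hk
  have h := Nat.eq_of_sq_lt_sq_add (le_prefixCode σ n) h₁ h₂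
  obtain ⟨rfl, hagree⟩ := prefixCode_eq_prefixCode h
  exact ⟨congrArg (· ^ 2) h, hagree⟩

noncomputable def lacunaryDigits (s : Finset (ℕ → Bool)) (c : (ℕ → Bool) → ℤ) (k : ℕ) : ℤ :=
  ∑ σ ∈ s, (lacunaryExponents σ).indicator (fun _ => c σ) k

lemma sum_zsmul_lacunarySum (s : Finset (ℕ → Bool)) (c : (ℕ → Bool) → ℤ) :
    ∑ σ ∈ s, c σ • lacunarySum σ = ∑' k, (lacunaryDigits s c k : ℝ) * 2⁻¹ ^ k := by
  have hsum : ∀ σ ∈ s, Summable fun k =>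
      c σ * (lacunaryExponents σ).indicator (fun k => (2⁻¹ : ℝ) ^ k) k :=
    fun σ _ => ((summable_geometric_of_lt_one (by norm_num) (by norm_num)).indicator _).mul_left _
  simp_rw [zsmul_eq_mul, lacunarySum_eq_tsum_indicator, ← tsum_mul_left]
  rw [← Summable.tsum_finsetSum hsum]
  refine tsum_congr fun k => ?_
  push_cast [lacunaryDigits, Finset.sum_mul]
  refine Finset.sum_congr rfl fun σ _ => ?_
  by_cases h : k ∈ lacunaryExponents σ <;> simp [h]

theorem linearIndependent_lacunarySum : LinearIndependent ℚ lacunarySum := by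
  rw [← LinearIndependent.iff_fractionRing ℤ ℚ, linearIndependent_iff']
  intro s c hrel σ₀ hσ₀
  by_contra hc
  set M := ∑ σ ∈ s, (c σ).natAbs
  obtain ⟨n, hsep, hn⟩ :=
    ((eventually_prefix_separates s).and (eventually_gt_atTop (2 * M))).exists
  set p := prefixCode σ₀ n ^ 2
  have hwindow : ∀ k, p < k + n → k < p + n →
      lacunaryDigits s c k = (lacunaryExponents σ₀).indicator (fun _ => c σ₀) k := by
    intro k h₁ h₂
    refine Finset.sum_eq_single_of_mem σ₀ hσ₀ fun τ hτ hne =>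
      indicator_of_notMem (fun hk => hne ?_) _
    exact hsep τ hτ σ₀ hσ₀ (eq_of_mem_lacunaryExponents hk h₁ h₂).2
  refine tsum_dyadic_ne_zero (M := M) (p := p) (G := n) (fun k => ?_) ?_ ?_ ?_
    (sum_zsmul_lacunarySum s c ▸ hrel)
  · refine (Finset.abs_sum_le_sum_abs _ _).trans ?_
    push_cast [M]
    refine Finset.sum_le_sum fun σ _ => ?_
    by_cases h : k ∈ lacunaryExponents σ <;> simp [h]
  · exact hn.trans Nat.lt_two_pow_self
  · rw [hwindow p (by omega) (by omega),
      indicator_of_mem (show p ∈ lacunaryExponents σ₀ from ⟨n, rfl⟩)]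
    exact hc
  · intro k hkp h₁ h₂
    rw [hwindow k h₁ h₂]
    exact indicator_of_notMem (fun hk => hkp (eq_of_mem_lacunaryExponents hk h₁ h₂).1) _

instance {ι α : Type*} [Infinite ι] [TopologicalSpace α] [Nontrivial α] :
    PerfectSpace (ι → α) := by
  classical
  refine perfectSpace_iff_forall_not_isolated.mpr fun σ => ?_
  choose y hy using fun i => exists_ne (σ i)
  have hlim : Tendsto (fun i => update σ i (y i)) cofinite (𝓝 σ) :=
    tendsto_pi_nhds.mpr fun k => tendsto_const_nhds.congr' <|
      (eventually_cofinite_ne k).mono fun i hi => (update_of_ne hi.symm _ _).symm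
  have hne : ∀ i, update σ i (y i) ≠ σ := fun i h => hy i (by simpa using congrFun h i)
  exact (tendsto_nhdsWithin_of_tendsto_nhds_of_eventually_within _ hlim
    (Eventually.of_forall hne)).neBot

lemma perfect_range_of_injective {X Y : Type*} [TopologicalSpace X] [CompactSpace X]
    [PerfectSpace X] [TopologicalSpace Y] [T2Space Y] {f : X → Y} (hf : Continuous f)
    (hinj : Injective f) : Perfect (range f) := by
  refine ⟨(isCompact_range hf).isClosed, preperfect_iff_nhds.mpr ?_⟩
  rintro _ ⟨x, rfl⟩ U hU
  obtain ⟨z, ⟨hzU, -⟩, hzx⟩ := preperfect_iff_nhds.mp PerfectSpace.univ_preperfect x (mem_univ x)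
    (f ⁻¹' U) (hf.continuousAt.preimage_mem_nhds hU)
  exact ⟨f z, ⟨hzU, mem_range_self z⟩, hinj.ne hzx⟩

lemma exists_cylinder_subset {α : Type*} [TopologicalSpace α] [DiscreteTopology α]
    {U : Set (ℕ → α)} (hU : IsOpen U) {σ : ℕ → α} (hσ : σ ∈ U) : ∃ n, cylinder σ n ⊆ U := by
  obtain ⟨_, ⟨x, n, rfl⟩, hx, hsub⟩ :=
    (isTopologicalBasis_cylinders fun _ => α).exists_subset_of_mem_open hσ hU
  exact ⟨n, mem_cylinder_iff_eq.mp hx ▸ hsub⟩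

lemma exists_rat_ne_zero_mem {U : Set ℝ} (hU : IsOpen U) (hne : U.Nonempty) :
    ∃ q : ℚ, q ≠ 0 ∧ (q : ℝ) ∈ U := by
  obtain ⟨_, ⟨⟨q, rfl⟩, hq⟩, hqU⟩ :=
    (Rat.denseRange_cast.sdiff_singleton (0 : ℝ)).exists_mem_open hU hne
  exact ⟨q, by simpa using hq, hqU⟩

lemma interior_eq_empty_of_linearIndepOn {S : Set ℝ} (hS : LinearIndepOn ℚ id S) :
    interior S = ∅ := by
  by_contra h
  obtain ⟨x, hx⟩ := nonempty_iff_ne_empty.mpr h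
  obtain ⟨r, hr⟩ := Rat.denseRange_cast.exists_mem_open isOpen_interior ⟨x, hx⟩
  obtain ⟨_, ⟨⟨s, rfl⟩, hsr⟩, hs⟩ :=
    (Rat.denseRange_cast.sdiff_singleton (r : ℝ)).exists_mem_open isOpen_interior ⟨x, hx⟩
  have hpair := (LinearIndepOn.pair_iff id hsr).mp
    (hS.mono (insert_subset (interior_subset hs) (singleton_subset_iff.mpr (interior_subset hr))))
  have := hpair r (-s) (by simp only [id, Rat.smul_def]; push_cast; ring)
  exact hsr (by simp [this.1, neg_eq_zero.mp this.2])

lemma isNowhereDense_range_rat_mul_lacunarySum (r : ℚ) :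
    IsNowhereDense (range fun σ => (r : ℝ) * lacunarySum σ) := by
  refine (IsClosed.isNowhereDense_iff (isCompact_range
    ((continuous_const_mul (r : ℝ)).comp continuous_lacunarySum)).isClosed).mpr ?_
  change interior (range fun σ => (r : ℝ) * lacunarySum σ) = ∅
  rcases eq_or_ne r 0 with rfl | hr
  · simp only [Rat.cast_zero, zero_mul, range_const, interior_singleton]
  · refine interior_eq_empty_of_linearIndepOn ?_
    convert (linearIndependent_lacunarySum.units_smul fun _ => Units.mk0 r hr).linearIndepOn_id
      using 2
    ext σ; simp [Rat.smul_def]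

def interleave {α : Type*} (v u : ℕ → α) (m : ℕ) : α := if Even m then v (m / 2) else u (m / 2)

@[simp] lemma interleave_two_mul {α : Type*} (v u : ℕ → α) (n : ℕ) :
    interleave v u (2 * n) = v n := by
  simp [interleave]

@[simp] lemma interleave_two_mul_add_one {α : Type*} (v u : ℕ → α) (n : ℕ) :
    interleave v u (2 * n + 1) = u n := by
  rw [interleave, if_neg (by simp)]
  congr
  omega

lemma interleave_inj {α : Type*} {v u v' u' : ℕ → α} :
    interleave v u = interleave v' u' ↔ v = v' ∧ u = u' := by
  refine ⟨fun h => ⟨funext fun n => ?_, funext fun n => ?_⟩, fun ⟨hv, hu⟩ => hv ▸ hu ▸ rfl⟩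
  · simpa using congrFun h (2 * n)
  · simpa using congrFun h (2 * n + 1)

lemma continuous_interleave {α : Type*} [TopologicalSpace α] (u : ℕ → α) :
    Continuous fun v => interleave v u :=
  continuous_pi fun m => by unfold interleave; split_ifs <;> fun_prop

def padFalse (L : ℕ) (v : ℕ → Bool) (n : ℕ) : Bool := if n < L then false else v (n - L)

lemma padFalse_injective (L : ℕ) : Injective (padFalse L) := fun v v' h =>
  funext fun n => by simpa [padFalse] using congrFun h (n + L)

lemma continuous_padFalse (L : ℕ) : Continuous (padFalse L) :=
  continuous_pi fun n => by unfold padFalse; split_ifs <;> fun_prop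

lemma interleave_padFalse_mem_cylinder (L : ℕ) (v u : ℕ → Bool) :
    interleave (padFalse L v) u ∈ cylinder (interleave (fun _ => false) u) L := fun k hk => by
  simp only [interleave, padFalse]
  split_ifs <;> first | rfl | omega

lemma exists_rat_mul_lacunarySum_interleave_mem (u : ℕ → Bool) {a b : ℝ} (hab : a < b) :
    ∃ q : ℚ, q ≠ 0 ∧ ∃ L, ∀ v, (q : ℝ) * lacunarySum (interleave (padFalse L v) u) ∈ Ioo a b := by
  set σ₀ := interleave (fun _ => false) u
  have hx := lacunarySum_pos σ₀
  obtain ⟨q, hq, hqab⟩ := exists_rat_ne_zero_mem isOpen_Ioo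
    (nonempty_Ioo.mpr (div_lt_div_of_pos_right hab hx))
  have hmem : (q : ℝ) * lacunarySum σ₀ ∈ Ioo a b :=
    ⟨(div_lt_iff₀ hx).mp hqab.1, (lt_div_iff₀ hx).mp hqab.2⟩
  obtain ⟨L, hL⟩ := exists_cylinder_subset
    (isOpen_Ioo.preimage ((continuous_const_mul _).comp continuous_lacunarySum)) hmem
  exact ⟨q, hq, L, fun v => hL (interleave_padFalse_mem_cylinder L v u)⟩

lemma linearIndependent_rat_mul_lacunarySum_interleave {ι : Type*} {e : ι → ℕ → Bool}
    (he : Injective e) {q : ι → ℚ} (hq : ∀ i, q i ≠ 0) (L : ι → ℕ) :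
    LinearIndependent ℚ fun p : ι × (ℕ → Bool) =>
      (q p.1 : ℝ) * lacunarySum (interleave (padFalse (L p.1) p.2) (e p.1)) := by
  have hembed : Injective fun p : ι × (ℕ → Bool) => interleave (padFalse (L p.1) p.2) (e p.1) :=
    fun ⟨i, v⟩ ⟨j, v'⟩ h => by
      obtain ⟨hv, hu⟩ := interleave_inj.mp h
      obtain rfl : i = j := he hu
      exact Prod.ext rfl (padFalse_injective _ hv)
  convert (linearIndependent_lacunarySum.comp _ hembed).units_smul
    fun p => Units.mk0 (q p.1) (hq p.1) using 1
  ext p; simp [Rat.smul_def]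

open Cardinal in
theorem stmt_3_general {ι : Type} (hι : #ι = Cardinal.continuum) (I : ι → Set ℝ)
    (hI : ∀ i, ∃ a b : ℝ, a < b ∧ I i = Set.Ioo a b) :
    ∃ P : ι → Set ℝ,
      (∀ i, Perfect (P i) ∧ (P i).Nonempty ∧ P i ⊆ I i) ∧
      (Pairwise fun i j => Disjoint (P i) (P j)) ∧
      IsMeagre (⋃ i, P i) ∧
      LinearIndependent ℚ ((↑) : (⋃ i, P i) → ℝ) := by
  obtain ⟨e⟩ : Nonempty (ι ↪ (ℕ → Bool)) := by rw [← Cardinal.le_def, hι]; simp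
  have hplace : ∀ i, ∃ q : ℚ, q ≠ 0 ∧ ∃ L, ∀ v,
      (q : ℝ) * lacunarySum (interleave (padFalse L v) (e i)) ∈ I i := fun i => by
    obtain ⟨a, b, hab, hIi⟩ := hI i
    exact hIi ▸ exists_rat_mul_lacunarySum_interleave_mem (e i) hab
  choose q hq L hL using hplace
  set w : ι × (ℕ → Bool) → ℝ :=
    fun p => (q p.1 : ℝ) * lacunarySum (interleave (padFalse (L p.1) p.2) (e p.1))
  have hw : LinearIndependent ℚ w :=
    linearIndependent_rat_mul_lacunarySum_interleave e.injective hq L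
  have hcont : ∀ i, Continuous fun v => w (i, v) := fun i =>
    (continuous_const_mul (q i : ℝ)).comp <| continuous_lacunarySum.comp <|
      (continuous_interleave (e i)).comp (continuous_padFalse (L i))
  refine ⟨fun i => range fun v => w (i, v), fun i => ⟨perfect_range_of_injective (hcont i)
      (hw.injective.comp (Prod.mk_right_injective i)), range_nonempty _,
      range_subset_iff.mpr (hL i)⟩,
    fun i j hij => disjoint_range_iff.mpr fun v v' h => hij (congrArg Prod.fst (hw.injective h)),
    ?_, ?_⟩
  · refine (isMeagre_iUnion fun r : ℚ =>
      (isNowhereDense_range_rat_mul_lacunarySum r).isMeagre).mono ?_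
    rintro _ ⟨_, ⟨i, rfl⟩, v, rfl⟩
    exact mem_iUnion.mpr ⟨q i, _, rfl⟩
  · have hunion : ⋃ i, range (fun v => w (i, v)) = range w := by ext; simp
    rw [hunion]
    exact hw.linearIndepOn_id

open Cardinal in
theorem stmt_3 {ι : Type} (hι : #ι = Cardinal.continuum) (I : ι → Set ℝ)
    (hI : ∀ i, ∃ a b : ℝ, a < b ∧ I i = Set.Ioo a b)
    (hall : ∀ a b : ℝ, a < b → ∃ i, I i = Set.Ioo a b) :
    ∃ P : ι → Set ℝ,
      (∀ i, Perfect (P i) ∧ (P i).Nonempty ∧ P i ⊆ I i) ∧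
      (Pairwise fun i j => Disjoint (P i) (P j)) ∧
      IsMeagre (⋃ i, P i) ∧
      LinearIndependent ℚ ((↑) : (⋃ i, P i) → ℝ) :=
  stmt_3_general hι I hI
end

section
/- Suppose F ⊆ ω^ω × ω^ω × ℝ is a Borel set and U, V ⊆ ω^ω are basic open sets such that: (a) the set of (x,y) ∈ U × V with empty section F_{(x,y)} is meager; (b) the set of (x,y) ∈ U × V with uncountable section F_{(x,y)} is meager; (c) for each z ∈ ℝ the section F^z = {(x,y) : (x,y,z) ∈ F} is meager. Then there is a perfect set P ⊆ U × V such that every (x,y) ∈ P has nonempty section F_{(x,y)}, and for distinct (x',y'), (x'',y'') ∈ P the sections F_{(x',y')} and F_{(x'',y'')} are disjoint and x' ≠ x''. -/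
open Set Filter Topology TopologicalSpace Function

/-!
The relation `R = {(p, q) | F_p ∩ F_q ≠ ∅}` is the projection of a Borel set, hence analytic,
hence has the Baire property. Over the comeagre set of `p` with countable `F_p`, its vertical
section at `p` lies in the countable union of the meagre sets `F^z`, `z ∈ F_p`, so `R` is meagre
by Kuratowski–Ulam. The relation "same first coordinate" is closed nowhere dense. Mycielski's
theorem then gives a continuous copy of Cantor space in `U × V` avoiding the meagre set of points
with empty section, whose distinct pairs avoid both relations; its range is the perfect set.
-/

section

variable {X : Type*} [TopologicalSpace X]

theorem Filter.EventuallyEq.isMeagre_diff {s t : Set X} (h : s =ᵇ t) : IsMeagre (s \ t) :=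
  (eventuallyEq_set.1 h).mono fun _ hx hst => hst.2 (hx.1 hst.1)

theorem exists_antitone_isOpen_dense_of_mem_residual {s : Set X} (hs : s ∈ residual X) :
    ∃ G : ℕ → Set X, Antitone G ∧ (∀ n, IsOpen (G n)) ∧ (∀ n, Dense (G n)) ∧ ⋂ n, G n ⊆ s := by
  obtain ⟨S, hSo, hSd, hSc, hSs⟩ := mem_residual_iff.1 hs
  obtain ⟨f, hf⟩ := (hSc.insert univ).exists_eq_range (insert_nonempty _ _)
  have hf' : ∀ n, IsOpen (f n) ∧ Dense (f n) := by
    intro n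
    obtain h | h : f n ∈ insert univ S := hf ▸ mem_range_self n
    · exact h ▸ ⟨isOpen_univ, dense_univ⟩
    · exact ⟨hSo _ h, hSd _ h⟩
  refine ⟨fun n => ⋂₀ (f '' Iic n), fun m n hmn => sInter_subset_sInter
    (image_mono (Iic_subset_Iic.2 hmn)), fun n => ((finite_Iic n).image f).isOpen_sInter
    (forall_mem_image.2 fun k _ => (hf' k).1), fun n => ((finite_Iic n).image f).dense_sInter
    (forall_mem_image.2 fun k _ => (hf' k).1) (forall_mem_image.2 fun k _ => (hf' k).2), ?_⟩
  refine fun x hx => hSs fun t ht => ?_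
  obtain ⟨k, rfl⟩ : t ∈ range f := hf ▸ mem_insert_of_mem _ ht
  exact mem_iInter.1 hx k _ (mem_image_of_mem f (mem_Iic.2 le_rfl))

theorem eq_of_forall_mem_closure_image [T2Space X] {Y : Type*} [TopologicalSpace Y] {f : Y → X}
    {x : X} {y : Y} (hf : ContinuousAt f y) (hx : ∀ s ∈ 𝓝 y, x ∈ closure (f '' s)) :
    x = f y := by
  have : ClusterPt x (map f (𝓝 y)) := clusterPt_iff_forall_mem_closure.2 fun s hs =>
    closure_mono (image_preimage_subset f s) (hx _ hs)
  exact eq_of_nhds_neBot (this.mono hf)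

theorem isNowhereDense_diagonal [PerfectSpace X] [T2Space X] : IsNowhereDense (diagonal X) := by
  rw [isClosed_diagonal.isNowhereDense_iff, eq_empty_iff_forall_notMem]
  rintro ⟨a, b⟩ h
  obtain ⟨U, hU, V, hV, hUV⟩ := mem_nhds_prod_iff.1 (isOpen_interior.mem_nhds h)
  obtain rfl : a = b := interior_subset (s := diagonal X) h
  obtain ⟨c, hc, hca⟩ := preperfect_iff_nhds.1 PerfectSpace.univ_preperfect a trivial V hV
  exact hca (interior_subset (s := diagonal X) (hUV (mk_mem_prod (mem_of_mem_nhds hU) hc.1))).symm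

theorem Continuous.preperfect_range {Y : Type*} [TopologicalSpace Y] [PerfectSpace Y] {f : Y → X}
    (hf : Continuous f) (hinj : Injective f) : Preperfect (range f) := by
  refine preperfect_iff_nhds.2 ?_
  rintro _ ⟨y, rfl⟩ U hU
  obtain ⟨z, hz, hzy⟩ :=
    preperfect_iff_nhds.1 PerfectSpace.univ_preperfect y trivial _ (hf.continuousAt hU)
  exact ⟨f z, ⟨hz.1, mem_range_self z⟩, hinj.ne hzy⟩

theorem isMeagre_setOf_fst_eq_fst [PerfectSpace X] [T2Space X] {Y : Type*} [TopologicalSpace Y] :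
    IsMeagre {q : (X × Y) × (X × Y) | q.1.1 = q.2.1} :=
  isNowhereDense_diagonal.isMeagre.preimage_of_isOpenMap (by fun_prop)
    (isOpenMap_fst.prodMap isOpenMap_fst)

end

section BaireHull

variable {X : Type*} [TopologicalSpace X] [SecondCountableTopology X]

theorem exists_baireMeasurableSet_hull (s : Set X) :
    ∃ t, s ⊆ t ∧ t ⊆ closure s ∧ BaireMeasurableSet t ∧
      ∀ u, BaireMeasurableSet u → s ⊆ u → IsMeagre (t \ u) := by
  -- `O` is the largest open set in which `s` is meagre.
  set O := ⋃₀ {V ∈ countableBasis X | IsMeagre (V ∩ s)}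
  have hO : IsOpen O := isOpen_sUnion fun V hV => isOpen_of_mem_countableBasis hV.1
  have hOs : IsMeagre (O ∩ s) := by
    show IsMeagre (⋃₀ _ ∩ s)
    rw [sUnion_eq_biUnion, iUnion₂_inter]
    exact isMeagre_biUnion ((countable_countableBasis X).mono fun _ h => h.1) fun V hV => hV.2
  have hmax : ∀ O', IsOpen O' → IsMeagre (O' ∩ s) → O' ⊆ O := fun O' hO' hm x hx => by
    obtain ⟨V, hV, hxV, hVO'⟩ := (isBasis_countableBasis X).exists_subset_of_mem_open hx hO'
    exact ⟨V, ⟨hV, hm.mono (inter_subset_inter_left s hVO')⟩, hxV⟩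
  refine ⟨(closure s \ O) ∪ (O ∩ s), fun x hx => ?_, union_subset sdiff_subset
    (inter_subset_right.trans subset_closure), ?_, fun u hu hsu => ?_⟩
  · by_cases hxO : x ∈ O
    exacts [Or.inr ⟨hxO, hx⟩, Or.inl ⟨subset_closure hx, hxO⟩]
  · rw [sdiff_eq, ← compl_compl (closure s ∩ Oᶜ), compl_inter, compl_compl]
    exact (isClosed_closure.isOpen_compl.union hO).baireMeasurableSet.compl.union
      hOs.baireMeasurableSet
  · obtain ⟨O', hO', hO'u⟩ := hu.compl.residualEq_isOpen
    have hO'O : O' ⊆ O := hmax O' hO' <| hO'u.symm.isMeagre_diff.mono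
      fun x (hx : x ∈ O' ∩ s) => (⟨hx.1, not_not.2 (hsu hx.2)⟩ : x ∈ O' \ uᶜ)
    refine hO'u.isMeagre_diff.mono ?_
    rintro x ⟨⟨-, hxO⟩ | ⟨-, hxs⟩, hxu⟩
    exacts [⟨hxu, fun hxO' => hxO (hO'O hxO')⟩, absurd (hsu hxs) hxu]

end BaireHull

namespace PiNat

theorem exists_forall_res {α : Type*} {P : List α → Prop} (h0 : P [])
    (h : ∀ l, P l → ∃ a, P (a :: l)) : ∃ y : ℕ → α, ∀ n, P (res y n) := by
  choose next hnext using h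
  let L : ℕ → {l // P l} := fun n => Nat.rec ⟨[], h0⟩ (fun _ l => ⟨_, hnext l.1 l.2⟩) n
  have hL : ∀ n, res (fun k => next (L k).1 (L k).2) n = (L n).1 := by
    intro n
    induction n with
    | zero => rfl
    | succ n ih => rw [res_succ, ih]
  exact ⟨_, fun n => hL n ▸ (L n).2⟩

variable {E : ℕ → Type*}

theorem mem_cylinder_of_antitone {c : ℕ → ∀ n, E n} {ℓ : ℕ → ℕ}
    (hc : Antitone fun n => cylinder (c n) (ℓ n)) (hℓ : ∀ n, n ≤ ℓ n) (n : ℕ) :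
    (fun i => c (i + 1) i) ∈ cylinder (c n) (ℓ n) := by
  intro i hi
  have hm := self_mem_cylinder (c (max n (i + 1))) (ℓ (max n (i + 1)))
  rw [← hc (le_max_left n (i + 1)) hm i hi]
  exact (hc (le_max_right n (i + 1)) hm i (by have := hℓ (i + 1); omega)).symm

variable [∀ n, TopologicalSpace (E n)] [∀ n, DiscreteTopology (E n)]

theorem hasBasis_nhds_cylinder (x : ∀ n, E n) : (𝓝 x).HasBasis (fun _ => True) (cylinder x) := by
  refine ⟨fun U => ⟨fun hU => ?_, fun ⟨n, _, hn⟩ =>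
    mem_of_superset ((isOpen_cylinder E x n).mem_nhds (self_mem_cylinder x n)) hn⟩⟩
  obtain ⟨_, ⟨z, n, rfl⟩, hxz, hzU⟩ := (isTopologicalBasis_cylinders E).mem_nhds_iff.1 hU
  exact ⟨n, trivial, mem_cylinder_iff_eq.1 hxz ▸ hzU⟩

theorem exists_cylinder_subset_of_mem_nhds {x : ∀ n, E n} {U : Set (∀ n, E n)} (hU : U ∈ 𝓝 x)
    (L : ℕ) : ∃ n, L ≤ n ∧ cylinder x n ⊆ U := by
  obtain ⟨n, -, hn⟩ := (hasBasis_nhds_cylinder x).mem_iff.1 hU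
  exact ⟨max n L, le_max_right n L, (cylinder_anti x (le_max_left n L)).trans hn⟩

instance perfectSpace [∀ n, Nontrivial (E n)] : PerfectSpace (∀ n, E n) := by
  refine ⟨preperfect_iff_nhds.2 fun x _ U hU => ?_⟩
  obtain ⟨n, -, hn⟩ := (hasBasis_nhds_cylinder x).mem_iff.1 hU
  obtain ⟨a, ha⟩ := exists_ne (x n)
  exact ⟨update x n a, ⟨hn (update_mem_cylinder x n a), trivial⟩,
    fun h => ha (by simpa using congr_fun h n)⟩

end PiNat

section Analytic

variable {X : Type*} [TopologicalSpace X] [T2Space X] [SecondCountableTopology X]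

theorem MeasureTheory.AnalyticSet.baireMeasurableSet {s : Set X}
    (hs : MeasureTheory.AnalyticSet s) : BaireMeasurableSet s := by
  rw [MeasureTheory.AnalyticSet] at hs
  obtain rfl | ⟨f, hf, rfl⟩ := hs
  · exact isOpen_empty.baireMeasurableSet
  -- `C l` is the cylinder of sequences extending the reversed prefix `l`.
  set C : List ℕ → Set (ℕ → ℕ) := fun l => {y | PiNat.res y l.length = l}
  have hC : ∀ l, C l = ⋃ a, C (a :: l) := fun l => by
    ext y
    simp only [C, mem_iUnion, mem_ofPred_eq, List.length_cons, PiNat.res_succ, List.cons.injEq]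
    exact ⟨fun h => ⟨_, rfl, h⟩, fun ⟨_, _, h⟩ => h⟩
  have hCres : ∀ y n, C (PiNat.res y n) = PiNat.cylinder y n := fun y n => by
    simp only [C, PiNat.res_length, PiNat.cylinder_eq_res]
  choose t hst htcl ht htmin using fun l => exists_baireMeasurableSet_hull (f '' C l)
  -- the points at which the scheme `t` cannot be continued: meagre by minimality of the hulls
  set M := ⋃ l, t l \ ⋃ a, t (a :: l)
  have hM : IsMeagre M := isMeagre_iUnion fun l => htmin l _ (.iUnion fun a => ht _) <| by
    rw [hC l, image_iUnion]
    exact iUnion_mono fun a => hst _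
  have hrange : range f ⊆ t [] := by simpa [C] using hst []
  have hsub : t [] \ M ⊆ range f := by
    rintro x ⟨hx, hxM⟩
    obtain ⟨y, hy⟩ := PiNat.exists_forall_res (P := fun l => x ∈ t l) hx fun l hl => by
      by_contra! h
      exact hxM (mem_iUnion.2 ⟨l, hl, by simpa using h⟩)
    refine ⟨y, (eq_of_forall_mem_closure_image hf.continuousAt fun s hs => ?_).symm⟩
    obtain ⟨n, -, hn⟩ := (PiNat.hasBasis_nhds_cylinder y).mem_iff.1 hs
    exact closure_mono (image_mono hn) (hCres y n ▸ htcl _ (hy n))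
  refine (ht []).congr (eventuallyEq_set.2 ?_)
  filter_upwards [hM] with x hx
  exact ⟨fun h => hsub ⟨h, hx⟩, fun h => hrange h⟩

end Analytic

section KuratowskiUlam

variable {X Y : Type*} [TopologicalSpace X] [TopologicalSpace Y] [SecondCountableTopology Y]

theorem IsNowhereDense.eventually_residual_isNowhereDense_sections {N : Set (X × Y)}
    (hN : IsNowhereDense N) : ∀ᶠ x in residual X, IsNowhereDense {y | (x, y) ∈ N} := by
  have hdense : Dense (closure N)ᶜ := interior_eq_empty_iff_dense_compl.1 hN
  have hV : ∀ V ∈ countableBasis Y, ∀ᶠ x in residual X, V.Nonempty →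
      ∃ y ∈ V, (x, y) ∉ closure N := fun V hV => by
    by_cases hVne : V.Nonempty
    · have hVo := isOpen_of_mem_countableBasis hV
      refine mem_of_superset (residual_of_dense_open (s := Prod.fst '' ((closure N)ᶜ ∩ univ ×ˢ V))
        (isOpenMap_fst _ (isClosed_closure.isOpen_compl.inter (isOpen_univ.prod hVo)))
        (dense_iff_inter_open.2 fun U hU hUne => ?_)) ?_
      · obtain ⟨⟨a, b⟩, ⟨haU, hbV⟩, hab⟩ :=
          hdense.inter_open_nonempty _ (hU.prod hVo) (hUne.prod hVne)
        exact ⟨a, haU, (a, b), ⟨hab, trivial, hbV⟩, rfl⟩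
      · rintro _ ⟨⟨a, b⟩, ⟨hab, -, hbV⟩, rfl⟩ -
        exact ⟨b, hbV, hab⟩
    · exact univ_mem' fun x h => absurd h hVne
  filter_upwards [(eventually_countable_ball (countable_countableBasis Y)).2 hV] with x hx
  have hcl : IsClosed {y | (x, y) ∈ closure N} := isClosed_closure.preimage (by fun_prop)
  refine IsNowhereDense.mono (fun y hy => subset_closure (s := N) hy)
    (hcl.isNowhereDense_iff.2 (eq_empty_iff_forall_notMem.2 fun y hy => ?_))
  obtain ⟨V, hV, hyV, hVsub⟩ :=
    (isBasis_countableBasis Y).exists_subset_of_mem_open hy isOpen_interior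
  obtain ⟨y', hy'V, hy'⟩ := hx V hV ⟨y, hyV⟩
  exact hy' (interior_subset (s := {y | (x, y) ∈ closure N}) (hVsub hy'V))

theorem IsMeagre.eventually_residual_isMeagre_sections {M : Set (X × Y)} (hM : IsMeagre M) :
    ∀ᶠ x in residual X, IsMeagre {y | (x, y) ∈ M} := by
  obtain ⟨S, hS, hSc, hMS⟩ := isMeagre_iff_countable_union_isNowhereDense.1 hM
  filter_upwards [(eventually_countable_ball hSc).2 fun N hN =>
    (hS N hN).eventually_residual_isNowhereDense_sections] with x hx
  refine (isMeagre_biUnion hSc fun N hN => (hx N hN).isMeagre).mono fun y hy => ?_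
  obtain ⟨N, hN, hyN⟩ := hMS hy
  exact mem_biUnion hN hyN

/-- The Kuratowski–Ulam theorem, in the direction from sections to the whole set. -/
theorem BaireMeasurableSet.isMeagre_of_eventually_isMeagre_sections [BaireSpace X] [BaireSpace Y]
    {M : Set (X × Y)} (hM : BaireMeasurableSet M)
    (h : ∀ᶠ x in residual X, IsMeagre {y | (x, y) ∈ M}) : IsMeagre M := by
  obtain ⟨O, hO, hMO⟩ := hM.residualEq_isOpen
  have hOx : ∀ᶠ x in residual X, {y | (x, y) ∈ O} = ∅ := by
    filter_upwards [h, hMO.symm.isMeagre_diff.eventually_residual_isMeagre_sections]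
      with x hMx hOMx
    refine not_nonempty_iff_eq_empty.1 fun hne => not_isMeagre_of_isOpen
      (hO.preimage (by fun_prop)) hne ((hMx.union hOMx).mono fun y hy => ?_)
    by_cases hyM : (x, y) ∈ M
    exacts [Or.inl hyM, Or.inr ⟨hy, hyM⟩]
  have hO : O = ∅ := by
    refine image_eq_empty.1 (not_nonempty_iff_eq_empty.1 fun hne =>
      not_isMeagre_of_isOpen (isOpenMap_fst O hO) hne (mem_of_superset hOx ?_))
    rintro x hx ⟨p, hp, rfl⟩
    exact eq_empty_iff_forall_notMem.1 hx p.2 hp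
  simpa [hO] using hMO.isMeagre_diff

end KuratowskiUlam

section Mycielski

theorem isOpenMap_eval_prodMk_eval {ι X : Type*} [TopologicalSpace X] {i j : ι} (hij : i ≠ j) :
    IsOpenMap fun v : ι → X => (v i, v j) := by
  classical
  exact (IsOpenMap.id.prodMap (isOpenMap_eval ⟨j, hij.symm⟩)).comp
    (Homeomorph.piSplitAt i fun _ => X).isOpenMap

theorem exists_isOpen_subset_inter_prod_subset {ι X : Type*} [Finite ι] [TopologicalSpace X]
    {O : ι → Set X} (hO : ∀ i, IsOpen (O i)) (hne : ∀ i, (O i).Nonempty) {G : Set X}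
    (hG : IsOpen G) (hGd : Dense G) {H : Set (X × X)} (hH : IsOpen H) (hHd : Dense H) :
    ∃ (u : ι → X) (O' : ι → Set X), (∀ i, IsOpen (O' i) ∧ u i ∈ O' i ∧ O' i ⊆ O i ∩ G) ∧
      ∀ i j, i ≠ j → O' i ×ˢ O' j ⊆ H := by
  classical
  -- Work in `ι → X`, where the pairwise condition is a finite intersection of dense open sets.
  set D := ⋂ p : {p : ι × ι // p.1 ≠ p.2}, (fun v : ι → X => (v p.1.1, v p.1.2)) ⁻¹' H
  have hDo : IsOpen D := isOpen_iInter_of_finite fun p => hH.preimage (by fun_prop)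
  have hDd : Dense D := by
    show Dense (⋂ p, _)
    rw [← sInter_range]
    exact (finite_range _).dense_sInter (forall_mem_range.2 fun p => hH.preimage (by fun_prop))
      (forall_mem_range.2 fun p => hHd.preimage (isOpenMap_eval_prodMk_eval p.2))
  have hPo : IsOpen (univ.pi fun i => O i ∩ G) :=
    isOpen_set_pi finite_univ fun i _ => (hO i).inter hG
  obtain ⟨u, hu⟩ := hDd.inter_open_nonempty _ hPo
    (univ_pi_nonempty_iff.2 fun i => hGd.inter_open_nonempty _ (hO i) (hne i))
  obtain ⟨O', hO', hO'sub⟩ := isOpen_pi_iff'.1 (hPo.inter hDo) u hu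
  refine ⟨u, O', fun i => ⟨(hO' i).1, (hO' i).2, fun a ha => ?_⟩, fun i j hij ⟨a, b⟩ ⟨ha, hb⟩ => ?_⟩
  · have := (hO'sub (update_mem_pi_iff_of_mem (mem_univ_pi.2 fun k => (hO' k).2) |>.2
      fun _ => ha)).1
    simpa using mem_univ_pi.1 this i
  · have hv : update (update u i a) j b ∈ univ.pi O' := by
      refine update_mem_pi_iff_of_mem ?_ |>.2 fun _ => hb
      exact update_mem_pi_iff_of_mem (mem_univ_pi.2 fun k => (hO' k).2) |>.2 fun _ => ha
    have := mem_iInter.1 (hO'sub hv).2 ⟨(i, j), hij⟩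
    simpa [update_of_ne hij] using this

namespace PiNat

variable {E : ℕ → Type*} [∀ n, TopologicalSpace (E n)] [∀ n, DiscreteTopology (E n)]

theorem exists_cylinder_refinement {ι : Type*} [Finite ι] (c : ι → (∀ n, E n) × ℕ)
    {G : Set (∀ n, E n)} (hG : IsOpen G) (hGd : Dense G) {H : Set ((∀ n, E n) × ∀ n, E n)}
    (hH : IsOpen H) (hHd : Dense H) (L : ℕ) :
    ∃ c' : ι → (∀ n, E n) × ℕ, ∀ i, L ≤ (c' i).2 ∧
      cylinder (c' i).1 (c' i).2 ⊆ cylinder (c i).1 (c i).2 ∩ G ∧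
      ∀ j, j ≠ i → cylinder (c' i).1 (c' i).2 ×ˢ cylinder (c' j).1 (c' j).2 ⊆ H := by
  obtain ⟨u, O', hO', hH'⟩ := exists_isOpen_subset_inter_prod_subset
    (fun i => isOpen_cylinder E (c i).1 (c i).2) (fun i => ⟨_, self_mem_cylinder _ _⟩)
    hG hGd hH hHd
  choose ℓ hℓL hℓ using fun i =>
    exists_cylinder_subset_of_mem_nhds ((hO' i).1.mem_nhds (hO' i).2.1) L
  exact ⟨fun i => (u i, ℓ i), fun i => ⟨hℓL i, (hℓ i).trans (hO' i).2.2,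
    fun j hji => (prod_mono (hℓ i) (hℓ j)).trans (hH' i j hji.symm)⟩⟩

/-- Mycielski's theorem for the space `∀ n, E n`. -/
theorem exists_continuous_mem_residual {W : Set (∀ n, E n)} (hW : IsOpen W) (hWne : W.Nonempty)
    {s : Set (∀ n, E n)} (hs : s ∈ residual _) {t : Set ((∀ n, E n) × ∀ n, E n)}
    (ht : t ∈ residual _) :
    ∃ g : (ℕ → Bool) → ∀ n, E n, Continuous g ∧ (∀ x, g x ∈ W ∩ s) ∧
      ∀ x y, x ≠ y → (g x, g y) ∈ t := by
  obtain ⟨G, -, hGo, hGd, hGs⟩ := exists_antitone_isOpen_dense_of_mem_residual hs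
  obtain ⟨H, hHa, hHo, hHd, hHt⟩ := exists_antitone_isOpen_dense_of_mem_residual ht
  obtain ⟨w, hw⟩ := hWne
  obtain ⟨ℓ₀, -, hℓ₀⟩ := exists_cylinder_subset_of_mem_nhds (hW.mem_nhds hw) 0
  choose next hnext using fun n (c : (Fin n → Bool) → (∀ n, E n) × ℕ) =>
    exists_cylinder_refinement (fun σ : Fin (n + 1) → Bool => c (Fin.init σ))
      (hGo n) (hGd n) (hHo n) (hHd n) (n + 1)
  -- `D n σ` codes the cylinder attached to the node `σ` of the binary tree at level `n`.
  let D : ∀ n, (Fin n → Bool) → (∀ n, E n) × ℕ := fun n => Nat.rec (fun _ => (w, ℓ₀)) next n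
  let restr : (ℕ → Bool) → ∀ n, Fin n → Bool := fun x n k => x k
  have hanti : ∀ x, Antitone fun n => cylinder (D n (restr x n)).1 (D n (restr x n)).2 :=
    fun x => antitone_nat_of_succ_le fun n =>
      (hnext n (D n) (restr x (n + 1)) |>.2.1).trans inter_subset_left
  have hlen : ∀ x n, n ≤ (D n (restr x n)).2
    | _, 0 => Nat.zero_le _
    | x, n + 1 => (hnext n (D n) (restr x (n + 1))).1
  let g : (ℕ → Bool) → ∀ n, E n := fun x i => (D (i + 1) (restr x (i + 1))).1 i
  have hg : ∀ x n, g x ∈ cylinder (D n (restr x n)).1 (D n (restr x n)).2 :=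
    fun x => mem_cylinder_of_antitone (hanti x) (hlen x)
  refine ⟨g, continuous_pi fun i => ?_, fun x => ⟨hℓ₀ (hg x 0), hGs (mem_iInter.2 fun n =>
    ((hnext n (D n) (restr x (n + 1))).2.1 (hg x (n + 1))).2)⟩, fun x y hxy => ?_⟩
  · exact (continuous_of_discreteTopology
      (f := fun σ : Fin (i + 1) → Bool => (D (i + 1) σ).1 i)).comp
      (continuous_pi fun k => continuous_apply _)
  · refine hHt (mem_iInter.2 fun k => ?_)
    obtain ⟨m, hm⟩ := Function.ne_iff.1 hxy
    have hne : restr y (max k m + 1) ≠ restr x (max k m + 1) :=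
      fun h => hm (congr_fun h ⟨m, by omega⟩).symm
    exact hHa (le_max_left k m)
      ((hnext _ (D _) _).2.2 _ hne ⟨hg x (max k m + 1), hg y (max k m + 1)⟩)

end PiNat

theorem Homeomorph.exists_continuous_mem_residual {X : Type*} [TopologicalSpace X]
    {E : ℕ → Type*} [∀ n, TopologicalSpace (E n)] [∀ n, DiscreteTopology (E n)]
    (e : X ≃ₜ ∀ n, E n) {W : Set X} (hW : IsOpen W) (hWne : W.Nonempty) {s : Set X}
    (hs : s ∈ residual X) {t : Set (X × X)} (ht : t ∈ residual (X × X)) :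
    ∃ g : (ℕ → Bool) → X, Continuous g ∧ (∀ x, g x ∈ W ∩ s) ∧
      ∀ x y, x ≠ y → (g x, g y) ∈ t := by
  rw [← e.symm.residual_map_eq] at hs
  rw [← (e.prodCongr e).symm.residual_map_eq] at ht
  obtain ⟨g, hgc, hgs, hgt⟩ := PiNat.exists_continuous_mem_residual
    (hW.preimage e.symm.continuous) (e.symm.surjective.nonempty_preimage.2 hWne) hs ht
  exact ⟨e.symm ∘ g, e.symm.continuous.comp hgc, hgs, hgt⟩

end Mycielski

theorem isMeagre_setOf_not_disjoint_sections {X Z : Type*} [TopologicalSpace X] [PolishSpace X]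
    [MeasurableSpace X] [BorelSpace X] [TopologicalSpace Z] [PolishSpace Z] [MeasurableSpace Z]
    [BorelSpace Z] {F : Set (X × Z)} (hF : MeasurableSet F)
    (hcount : ∀ᶠ x in residual X, {z | (x, z) ∈ F}.Countable)
    (hmeagre : ∀ z, IsMeagre {x | (x, z) ∈ F}) :
    IsMeagre {p : X × X | ¬ Disjoint {z | (p.1, z) ∈ F} {z | (p.2, z) ∈ F}} := by
  have : PolishSpace ((X × X) × Z) := {}
  have hproj : {p : X × X | ¬ Disjoint {z | (p.1, z) ∈ F} {z | (p.2, z) ∈ F}} =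
      Prod.fst '' {w : (X × X) × Z | (w.1.1, w.2) ∈ F ∧ (w.1.2, w.2) ∈ F} := by
    ext p
    simp [not_disjoint_iff]
  have hBP : BaireMeasurableSet {p : X × X | ¬ Disjoint {z | (p.1, z) ∈ F} {z | (p.2, z) ∈ F}} :=
    hproj ▸ (((hF.preimage (by fun_prop)).inter (hF.preimage (by fun_prop))).analyticSet
      |>.image_of_continuous continuous_fst).baireMeasurableSet
  refine hBP.isMeagre_of_eventually_isMeagre_sections ?_
  filter_upwards [hcount] with x hx
  refine (isMeagre_biUnion hx fun z _ => hmeagre z).mono fun y hy => ?_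
  obtain ⟨z, hz, hz'⟩ := not_disjoint_iff.1 hy
  exact mem_biUnion hz hz'

def Homeomorph.arrowProdEquivProdArrow (ι α β : Type*) [TopologicalSpace α] [TopologicalSpace β] :
    (ι → α × β) ≃ₜ (ι → α) × (ι → β) where
  toEquiv := Equiv.arrowProdEquivProdArrow ι (fun _ => α) (fun _ => β)
  continuous_toFun := by dsimp [Equiv.arrowProdEquivProdArrow]; fun_prop
  continuous_invFun := by dsimp [Equiv.arrowProdEquivProdArrow]; fun_prop

theorem stmt_17
    (F : Set (((ℕ → ℕ) × (ℕ → ℕ)) × ℝ)) (hF : MeasurableSet F)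
    (U V : Set (ℕ → ℕ))
    (hU : ∃ (s : ℕ → ℕ) (n : ℕ), U = {x | ∀ i < n, x i = s i})
    (hV : ∃ (s : ℕ → ℕ) (n : ℕ), V = {x | ∀ i < n, x i = s i})
    (ha : IsMeagre {p ∈ U ×ˢ V | {z : ℝ | (p, z) ∈ F} = ∅})
    (hb : IsMeagre {p ∈ U ×ˢ V | ¬ {z : ℝ | (p, z) ∈ F}.Countable})
    (hc : ∀ z : ℝ, IsMeagre {p : (ℕ → ℕ) × (ℕ → ℕ) | (p, z) ∈ F}) :
    ∃ P : Set ((ℕ → ℕ) × (ℕ → ℕ)),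
      Perfect P ∧ P.Nonempty ∧ P ⊆ U ×ˢ V ∧
      (∀ p ∈ P, {z : ℝ | (p, z) ∈ F}.Nonempty) ∧
      ∀ p ∈ P, ∀ p' ∈ P, p ≠ p' →
        Disjoint {z : ℝ | (p, z) ∈ F} {z : ℝ | (p', z) ∈ F} ∧ p.1 ≠ p'.1 := by
  obtain ⟨sU, nU, rfl⟩ := hU
  obtain ⟨sV, nV, rfl⟩ := hV
  set W := {x : ℕ → ℕ | ∀ i < nU, x i = sU i} ×ˢ {x : ℕ → ℕ | ∀ i < nV, x i = sV i}
  have hWo : IsOpen W := (PiNat.isOpen_cylinder _ sU nU).prod (PiNat.isOpen_cylinder _ sV nV)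
  have hFW : ∀ p ∈ W, {z | (p, z) ∈ F ∩ Prod.fst ⁻¹' W} = {z | (p, z) ∈ F} := fun p hp => by
    simp [hp]
  have hcount : ∀ᶠ p in residual _, {z | (p, z) ∈ F ∩ Prod.fst ⁻¹' W}.Countable := by
    filter_upwards [hb] with p hp
    by_cases hpW : p ∈ W
    · exact hFW p hpW ▸ not_not.1 fun h => hp ⟨hpW, h⟩
    · simp [hpW]
  have hR := isMeagre_setOf_not_disjoint_sections
    (hF.inter (hWo.measurableSet.preimage measurable_fst)) hcount
    fun z => (hc z).mono fun p hp => hp.1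
  obtain ⟨g, hgc, hgs, hgt⟩ := (Homeomorph.arrowProdEquivProdArrow ℕ ℕ ℕ).symm
    |>.exists_continuous_mem_residual hWo ⟨(sU, sV), fun _ _ => rfl, fun _ _ => rfl⟩ ha
      (hR.union isMeagre_setOf_fst_eq_fst)
  have hg1 : ∀ x y, x ≠ y → (g x).1 ≠ (g y).1 := fun x y hxy h => hgt x y hxy (Or.inr h)
  refine ⟨range g, ⟨(isCompact_range hgc).isClosed, hgc.preperfect_range fun x y h =>
    by_contra fun hxy => hg1 x y hxy (congrArg Prod.fst h)⟩, range_nonempty g,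
    range_subset_iff.2 fun x => (hgs x).1, ?_, ?_⟩
  · rintro _ ⟨x, rfl⟩
    exact nonempty_iff_ne_empty.2 fun h => (hgs x).2 ⟨(hgs x).1, h⟩
  · rintro _ ⟨x, rfl⟩ _ ⟨y, rfl⟩ hne
    have hxy : x ≠ y := ne_of_apply_ne g hne
    refine ⟨?_, hg1 x y hxy⟩
    rw [← hFW _ (hgs x).1, ← hFW _ (hgs y).1]
    exact not_not.1 fun h => hgt x y hxy (Or.inl h)
end
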